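/- For every natural number k, the function σ_k : ℍ → ℍ defined by σ_k(x) = (x₂ + x₃·e₁)^k (the k-th power, computed in ℍ, of the quaternion x₂ + x₃·e₁) belongs to V_k and satisfies D̄σ_k = −k·σ_k. -/

import Mathlib

open Quaternion MvPolynomial

noncomputable section

/-- The standard imaginary quaternion units. -/
def e1 : ℍ[ℝ] := ⟨0, 1, 0, 0⟩
def e2 : ℍ[ℝ] := ⟨0, 0, 1, 0⟩
def e3 : ℍ[ℝ] := ⟨0, 0, 0, 1⟩

/-- Infinitesimal right translation: `(L_v σ)(x) = Dσ(x)[x·v]`. -/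
def Lop (v : ℍ[ℝ]) (σ : ℍ[ℝ] → ℍ[ℝ]) : ℍ[ℝ] → ℍ[ℝ] :=
  fun x => fderiv ℝ σ x (x * v)

/-- The operator `D̄σ = −((L₁σ)·e₁ + (L₂σ)·e₂ + (L₃σ)·e₃)`. -/
def Dbar (σ : ℍ[ℝ] → ℍ[ℝ]) : ℍ[ℝ] → ℍ[ℝ] :=
  fun x => -(Lop e1 σ x * e1 + Lop e2 σ x * e2 + Lop e3 σ x * e3)

/-- The four real coordinates of a quaternion. -/
def coords (x : ℍ[ℝ]) : Fin 4 → ℝ := ![x.re, x.imI, x.imJ, x.imK]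

/-- `σ ∈ V_k`: each of the four real components of `σ` is (given by) a harmonic
polynomial on `ℝ⁴`, homogeneous of degree `k`. -/
def memVk (k : ℕ) (σ : ℍ[ℝ] → ℍ[ℝ]) : Prop :=
  ∀ c : Fin 4, ∃ P : MvPolynomial (Fin 4) ℝ,
    P.IsHomogeneous k ∧ (∑ i : Fin 4, pderiv i (pderiv i P)) = 0 ∧
    ∀ x : ℍ[ℝ], eval (coords x) P = coords (σ x) c

/-- `σ_k(x) = (x₂ + x₃·e₁)^k`, computed in `ℍ`. -/
def sigmaPow (k : ℕ) : ℍ[ℝ] → ℍ[ℝ] :=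
  fun x => ((⟨x.imJ, x.imK, 0, 0⟩ : ℍ[ℝ]))^k

/-! `σ_k x = ofComplex (jkPart x ^ k)`, where `jkPart x = x₂ + x₃ i ∈ ℂ` and `ofComplex : ℂ → ℍ`
sends `i` to `e₁`. Right multiplication by `e₁` acts on `jkPart` as multiplication by `-i`, and
`jkPart (x e₃) = i jkPart (x e₂)`. Hence for holomorphic `f`, in `D̄ (ofComplex ∘ f ∘ jkPart)` the
`e₂` and `e₃` terms cancel (as `e₁ e₃ = -e₂`) and the `e₁` term leaves `-ofComplex (z f'(z))`:
`D̄` is minus the Euler operator `z d/dz`, whose eigenvalue on `z ^ k` is `k`. The components of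
`σ_k` are the real and imaginary parts of `(x₂ + i x₃) ^ k`, harmonic because they satisfy the
Cauchy–Riemann equations. -/

namespace MvPolynomial

variable {R σ : Type*} [CommRing R]

theorem pderiv_pderiv_comm (i j : σ) (p : MvPolynomial σ R) :
    pderiv i (pderiv j p) = pderiv j (pderiv i p) := by
  classical
  have h : ⁅pderiv (R := R) i, pderiv j⁆ = 0 :=
    derivation_ext fun k => by
      rw [Derivation.commutator_apply]; simp [pderiv_X, Pi.single_apply, apply_ite]
  simpa [Derivation.commutator_apply, sub_eq_zero] using congr($h p)

theorem pderiv_pderiv_add_pderiv_pderiv_eq_zero_of_cauchyRiemann {a b : σ}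
    {u v : MvPolynomial σ R} (hab : pderiv a u = pderiv b v) (hba : pderiv b u = -pderiv a v) :
    pderiv a (pderiv a u) + pderiv b (pderiv b u) = 0 ∧
      pderiv a (pderiv a v) + pderiv b (pderiv b v) = 0 := by
  have hav : pderiv a v = -pderiv b u := by rw [hba, neg_neg]
  constructor
  · rw [hab, hba, map_neg, pderiv_pderiv_comm, add_neg_cancel]
  · rw [hav, ← hab, map_neg, pderiv_pderiv_comm, neg_add_cancel]

end MvPolynomial

theorem ofComplex_I : ofComplex Complex.I = e1 := by
  ext <;> rfl

theorem e1_mul_e3 : e1 * e3 = -e2 := by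
  ext <;> simp only [Quaternion.re_mul, Quaternion.imI_mul, Quaternion.imJ_mul,
    Quaternion.imK_mul, Quaternion.re_neg, Quaternion.imI_neg, Quaternion.imJ_neg,
    Quaternion.imK_neg] <;> simp [e1, e2, e3]

def jkPart : ℍ[ℝ] →L[ℝ] ℂ :=
  LinearMap.toContinuousLinearMap
    { toFun := fun x => ⟨x.imJ, x.imK⟩
      map_add' := fun _ _ => rfl
      map_smul' := fun _ _ => by apply Complex.ext <;> simp }

theorem jkPart_apply (x : ℍ[ℝ]) : jkPart x = ⟨x.imJ, x.imK⟩ := rfl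

theorem jkPart_mul_e1 (x : ℍ[ℝ]) : jkPart (x * e1) = -Complex.I * jkPart x := by
  apply Complex.ext <;> simp only [jkPart_apply, Quaternion.imJ_mul, Quaternion.imK_mul] <;>
    simp [e1]

theorem jkPart_mul_e3 (x : ℍ[ℝ]) : jkPart (x * e3) = Complex.I * jkPart (x * e2) := by
  apply Complex.ext <;> simp only [jkPart_apply, Quaternion.imJ_mul, Quaternion.imK_mul] <;>
    simp [e2, e3]

theorem sigmaPow_eq_ofComplex (k : ℕ) : sigmaPow k = fun x => ofComplex (jkPart x ^ k) := by
  funext x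
  rw [map_pow]
  rfl

theorem Lop_ofComplex_comp {f : ℂ → ℂ} {f' : ℂ} {x : ℍ[ℝ]} (hf : HasDerivAt f f' (jkPart x))
    (v : ℍ[ℝ]) : Lop v (fun y => ofComplex (f (jkPart y))) x = ofComplex (jkPart (x * v) * f') := by
  have hF : HasFDerivAt (fun y => ofComplex (f (jkPart y))) _ x :=
    (LinearMap.toContinuousLinearMap ofComplex.toLinearMap).hasFDerivAt.comp x
      ((hf.hasFDerivAt.restrictScalars ℝ).comp x jkPart.hasFDerivAt)
  rw [Lop, hF.fderiv]
  simp

theorem Dbar_ofComplex_comp {f : ℂ → ℂ} {f' : ℂ} {x : ℍ[ℝ]} (hf : HasDerivAt f f' (jkPart x)) :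
    Dbar (fun y => ofComplex (f (jkPart y))) x = -ofComplex (jkPart x * f') := by
  have h1 : ofComplex (jkPart (x * e1) * f') * e1 = ofComplex (jkPart x * f') := by
    rw [jkPart_mul_e1, ← ofComplex_I, ← map_mul]
    congr 1
    linear_combination (-(f' * jkPart x)) * Complex.I_mul_I
  have h23 : ofComplex (jkPart (x * e2) * f') * e2 + ofComplex (jkPart (x * e3) * f') * e3 = 0 := by
    rw [jkPart_mul_e3, mul_assoc, mul_comm Complex.I, map_mul _ _ Complex.I, ofComplex_I,
      mul_assoc, e1_mul_e3, mul_neg, add_neg_cancel]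
  simp only [Dbar, Lop_ofComplex_comp hf, add_assoc, h1, h23, add_zero]

theorem Dbar_sigmaPow (k : ℕ) : Dbar (sigmaPow k) = (-(k : ℝ)) • sigmaPow k := by
  funext x
  have euler : jkPart x * (k * jkPart x ^ (k - 1)) = (k : ℝ) • jkPart x ^ k := by
    rcases eq_or_ne k 0 with rfl | hk
    · simp
    · rw [mul_left_comm, mul_pow_sub_one hk, Complex.real_smul, Complex.ofReal_natCast]
  rw [sigmaPow_eq_ofComplex, Dbar_ofComplex_comp (hasDerivAt_pow k _), euler, map_smul,
    Pi.smul_apply, neg_smul]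

/-- `(X₂ + i X₃)^k`, as the pair of its real and imaginary parts. -/
def jkPowPoly : ℕ → MvPolynomial (Fin 4) ℝ × MvPolynomial (Fin 4) ℝ
  | 0 => (1, 0)
  | k + 1 => ((jkPowPoly k).1 * X 2 - (jkPowPoly k).2 * X 3,
      (jkPowPoly k).1 * X 3 + (jkPowPoly k).2 * X 2)

theorem isHomogeneous_jkPowPoly (k : ℕ) :
    (jkPowPoly k).1.IsHomogeneous k ∧ (jkPowPoly k).2.IsHomogeneous k := by
  induction k with
  | zero => exact ⟨isHomogeneous_one _ _, isHomogeneous_zero _ _ _⟩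
  | succ k ih =>
    exact ⟨(ih.1.mul (isHomogeneous_X ℝ 2)).sub (ih.2.mul (isHomogeneous_X ℝ 3)),
      (ih.1.mul (isHomogeneous_X ℝ 3)).add (ih.2.mul (isHomogeneous_X ℝ 2))⟩

theorem eval_jkPowPoly (k : ℕ) (p : Fin 4 → ℝ) :
    eval p (jkPowPoly k).1 = ((⟨p 2, p 3⟩ : ℂ) ^ k).re ∧
      eval p (jkPowPoly k).2 = ((⟨p 2, p 3⟩ : ℂ) ^ k).im := by
  induction k with
  | zero => simp [jkPowPoly]
  | succ k ih => simp [jkPowPoly, pow_succ, Complex.mul_re, Complex.mul_im, ih.1, ih.2]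

theorem pderiv_jkPowPoly_of_ne {i : Fin 4} (h2 : i ≠ 2) (h3 : i ≠ 3) (k : ℕ) :
    pderiv i (jkPowPoly k).1 = 0 ∧ pderiv i (jkPowPoly k).2 = 0 := by
  induction k with
  | zero => simp [jkPowPoly]
  | succ k ih =>
    simp [jkPowPoly, pderiv_X_of_ne h2.symm, pderiv_X_of_ne h3.symm, ih.1, ih.2]

theorem jkPowPoly_cauchyRiemann (k : ℕ) :
    pderiv 2 (jkPowPoly k).1 = pderiv 3 (jkPowPoly k).2 ∧
      pderiv 3 (jkPowPoly k).1 = -pderiv 2 (jkPowPoly k).2 := by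
  induction k with
  | zero => simp [jkPowPoly]
  | succ k ih =>
    obtain ⟨h23, h32⟩ := ih
    have h₂₃ : pderiv 2 (X 3 : MvPolynomial (Fin 4) ℝ) = 0 := pderiv_X_of_ne (by decide)
    have h₃₂ : pderiv 3 (X 2 : MvPolynomial (Fin 4) ℝ) = 0 := pderiv_X_of_ne (by decide)
    simp only [jkPowPoly, map_sub, map_add, Derivation.leibniz, pderiv_X_self, h₂₃, h₃₂,
      smul_eq_mul, mul_one, mul_zero]
    constructor
    · linear_combination (X 2 : MvPolynomial (Fin 4) ℝ) * h23 - X 3 * h32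
    · linear_combination (X 2 : MvPolynomial (Fin 4) ℝ) * h32 + X 3 * h23

theorem laplacian_jkPowPoly (k : ℕ) :
    ∑ i : Fin 4, pderiv i (pderiv i (jkPowPoly k).1) = 0 ∧
      ∑ i : Fin 4, pderiv i (pderiv i (jkPowPoly k).2) = 0 := by
  obtain ⟨h0u, h0v⟩ := pderiv_jkPowPoly_of_ne (i := 0) (by decide) (by decide) k
  obtain ⟨h1u, h1v⟩ := pderiv_jkPowPoly_of_ne (i := 1) (by decide) (by decide) k
  obtain ⟨h23, h32⟩ := jkPowPoly_cauchyRiemann k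
  simp only [Fin.sum_univ_four, h0u, h0v, h1u, h1v, map_zero, zero_add]
  exact pderiv_pderiv_add_pderiv_pderiv_eq_zero_of_cauchyRiemann h23 h32

theorem memVk_sigmaPow (k : ℕ) : memVk k (sigmaPow k) := by
  have hσ (x : ℍ[ℝ]) :
      coords (sigmaPow k x) = ![(jkPart x ^ k).re, (jkPart x ^ k).im, 0, 0] := by
    rw [sigmaPow_eq_ofComplex]
    rfl
  obtain ⟨hu, hv⟩ := isHomogeneous_jkPowPoly k
  obtain ⟨Δu, Δv⟩ := laplacian_jkPowPoly k
  intro c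
  fin_cases c
  · exact ⟨_, hu, Δu, fun x => by rw [hσ, (eval_jkPowPoly k _).1]; rfl⟩
  · exact ⟨_, hv, Δv, fun x => by rw [hσ, (eval_jkPowPoly k _).2]; rfl⟩
  · exact ⟨0, isHomogeneous_zero _ _ _, by simp, fun x => by rw [hσ]; simp⟩
  · exact ⟨0, isHomogeneous_zero _ _ _, by simp, fun x => by rw [hσ]; simp⟩

theorem sigmaPow_eigenvector (k : ℕ) :
    memVk k (sigmaPow k) ∧ Dbar (sigmaPow k) = (-(k : ℝ)) • sigmaPow k :=
  ⟨memVk_sigmaPow k, Dbar_sigmaPow k⟩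

end
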